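/- The separation array is a complete invariant on simplified forests: if F and G are plane forests, each with N ≥ 2 leaves, in which every internal (non-leaf) node has at least two children, and F and G have equal separation arrays, then F = G. (This justifies the paper's claim that after eliminating single-subordinate aggregator nodes, exactly one organization instance needs to be evaluated per array representation.) -/

import Mathlib

/-- A rooted plane tree: a node carrying a finite ordered list of child subtrees.
A node with no children is a leaf. -/
inductive PTree : Type where
  | node : List PTree → PTree

namespace PTree

mutual
/-- Number of leaves of a plane tree. -/
def leaves : PTree → ℕ
  | .node [] => 1
  | .node (c :: cs) => c.leaves + leavesList cs

/-- Total number of leaves of a list of plane trees. -/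
def leavesList : List PTree → ℕ
  | [] => 0
  | c :: cs => c.leaves + leavesList cs
end

mutual
/-- Height of a plane tree (a single leaf has height 1). -/
def height : PTree → ℕ
  | .node [] => 1
  | .node (c :: cs) => 1 + max c.height (heightList cs)

/-- Maximum height among a list of plane trees (0 for the empty list). -/
def heightList : List PTree → ℕ
  | [] => 0
  | c :: cs => max c.height (heightList cs)
end

mutual
/-- Separation levels between consecutive leaves inside a tree whose root is at level `l`:
between two consecutive leaves lying in distinct children we record `l+1`
(one more than the level of their lowest common ancestor, which is the root). -/
def enc : PTree → ℕ → List ℕ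
  | .node [], _ => []
  | .node (c :: cs), l => c.enc (l + 1) ++ encList cs (l + 1)

/-- Separation levels for a list of sibling subtrees all at level `l`, including
the separator `l` between consecutive subtrees. -/
def encList : List PTree → ℕ → List ℕ
  | [], _ => []
  | c :: cs, l => (l :: c.enc l) ++ encList cs l
end

end PTree

/-- Total number of leaves of a plane forest. -/
def forestLeaves (F : List PTree) : ℕ := PTree.leavesList F

/-- Height of a plane forest: the maximum level of any of its nodes (roots are at level 1). -/
def forestHeight (F : List PTree) : ℕ := PTree.heightList F

/-- The separation array of a plane forest: for each pair of consecutive leaves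
(numbered left to right), the level at which they separate (`1` if they lie in
different trees, and `1 +` the level of their lowest common ancestor otherwise). -/
def forestSep : List PTree → List ℕ
  | [] => []
  | t :: ts => t.enc 1 ++ PTree.encList ts 1

mutual
/-- A plane tree is *simplified* if every internal (non-leaf) node has at least two
children. -/
def PTree.Simplified : PTree → Prop
  | .node [] => True
  | .node (c :: cs) => cs ≠ [] ∧ c.Simplified ∧ SimplifiedList cs

/-- Every tree in the list is simplified. -/
def SimplifiedList : List PTree → Prop
  | [] => True
  | c :: cs => c.Simplified ∧ SimplifiedList cs
end

/-- A plane forest is *simplified* if every internal (non-leaf) node of every one of its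
trees has at least two children. -/
def forestSimplified (F : List PTree) : Prop := SimplifiedList F

/-!
Inside a tree whose root sits at level `l`, every separation level exceeds `l`, while
`encList ts l` puts the separator `l` in front of each sibling. Hence the array of a list of
siblings splits uniquely into the first sibling's part and the rest, and induction on the trees
recovers them. Simplification is what tells a leaf (empty array) from an internal node: with at
least two children the latter contributes a separator.
-/

theorem List.takeWhile_append_eq_left {α : Type*} {p : α → Bool} {a b : List α}
    (ha : ∀ x ∈ a, p x) (hb : ∀ y ∈ b.head?, p y = false) : (a ++ b).takeWhile p = a := by
  rw [List.takeWhile_append_of_pos ha]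
  cases b with
  | nil => simp
  | cons y b => simp [List.takeWhile, hb y rfl]

theorem List.append_inj_of_takeWhile {α : Type*} {p : α → Bool} {a a' b b' : List α}
    (ha : ∀ x ∈ a, p x) (ha' : ∀ x ∈ a', p x)
    (hb : ∀ y ∈ b.head?, p y = false) (hb' : ∀ y ∈ b'.head?, p y = false)
    (h : a ++ b = a' ++ b') : a = a' ∧ b = b' := by
  have hpre : a = a' := by
    rw [← List.takeWhile_append_eq_left ha hb, h, List.takeWhile_append_eq_left ha' hb']
  subst hpre
  exact ⟨rfl, List.append_cancel_left h⟩

namespace PTree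

mutual
theorem lt_of_mem_enc : ∀ {t : PTree} {l x : ℕ}, x ∈ t.enc l → l < x
  | .node [], _, _, h => by simp [enc] at h
  | .node (_ :: _), _, _, h => by
    rcases List.mem_append.1 h with h | h
    · exact (lt_of_mem_enc h).le
    · exact le_of_mem_encList h
theorem le_of_mem_encList : ∀ {ts : List PTree} {l x : ℕ}, x ∈ encList ts l → l ≤ x
  | [], _, _, h => by simp [encList] at h
  | _ :: _, _, _, h => by
    simp only [encList, List.cons_append, List.mem_cons, List.mem_append] at h
    rcases h with rfl | h | h
    · exact le_rfl
    · exact (lt_of_mem_enc h).le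
    · exact le_of_mem_encList h
end

theorem eq_of_mem_head?_encList {ts : List PTree} {l y : ℕ} (hy : y ∈ (encList ts l).head?) :
    y = l := by
  cases ts <;> simp_all [encList]

theorem encList_ne_nil {ts : List PTree} (hts : ts ≠ []) (l : ℕ) : encList ts l ≠ [] := by
  cases ts <;> simp_all [encList]

theorem enc_append_encList_inj {c d : PTree} {cs ds : List PTree} {l : ℕ}
    (h : c.enc l ++ encList cs l = d.enc l ++ encList ds l) :
    c.enc l = d.enc l ∧ encList cs l = encList ds l :=
  List.append_inj_of_takeWhile (p := fun x => decide (l < x))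
    (fun _ hx => decide_eq_true (lt_of_mem_enc hx))
    (fun _ hx => decide_eq_true (lt_of_mem_enc hx))
    (fun _ hy => by simp [eq_of_mem_head?_encList hy])
    (fun _ hy => by simp [eq_of_mem_head?_encList hy]) h

mutual
theorem enc_injective : ∀ {t u : PTree} {l : ℕ}, t.Simplified → u.Simplified →
    t.enc l = u.enc l → t = u
  | .node [], .node [], _, _, _, _ => rfl
  | .node [], .node (_ :: _), _, _, hu, h => by
    simp [enc, encList_ne_nil hu.1] at h
  | .node (_ :: _), .node [], _, ht, _, h => by
    simp [enc, encList_ne_nil ht.1] at h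
  | .node (_ :: _), .node (_ :: _), _, ⟨_, hc, hcs⟩, ⟨_, hd, hds⟩, h => by
    obtain ⟨h₁, h₂⟩ := enc_append_encList_inj h
    rw [enc_injective hc hd h₁, encList_injective hcs hds h₂]
theorem encList_injective : ∀ {ts us : List PTree} {l : ℕ}, SimplifiedList ts →
    SimplifiedList us → encList ts l = encList us l → ts = us
  | [], [], _, _, _, _ => rfl
  | [], _ :: _, _, _, _, h => by simp [encList] at h
  | _ :: _, [], _, _, _, h => by simp [encList] at h
  | _ :: _, _ :: _, _, ⟨hc, hcs⟩, ⟨hd, hds⟩, h => by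
    simp only [encList, List.cons_append, List.cons.injEq, true_and] at h
    obtain ⟨h₁, h₂⟩ := enc_append_encList_inj h
    rw [enc_injective hc hd h₁, encList_injective hcs hds h₂]
end

end PTree

theorem one_cons_forestSep {F : List PTree} (hF : F ≠ []) :
    1 :: forestSep F = PTree.encList F 1 := by
  cases F with
  | nil => exact absurd rfl hF
  | cons t ts => rfl

/-- The separation array is a complete invariant on simplified
forests: if `F` and `G` are plane forests, each with `N ≥ 2` leaves, in which every
internal (non-leaf) node has at least two children, and `F` and `G` have equal
separation arrays, then `F = G`. -/
theorem sepArray_injective_on_simplified (N : ℕ) (hN : 2 ≤ N)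
    (F G : List PTree) (hF : F ≠ []) (hG : G ≠ [])
    (hFl : forestLeaves F = N) (hGl : forestLeaves G = N)
    (hFs : forestSimplified F) (hGs : forestSimplified G)
    (hsep : forestSep F = forestSep G) : F = G :=
  PTree.encList_injective (l := 1) hFs hGs <| by
    rw [← one_cons_forestSep hF, ← one_cons_forestSep hG, hsep]
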